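/- Every body of constant width in ℍ^d is reduced: if W is a convex body of constant width and Z ⊊ W is a convex body properly contained in W, then Δ(Z) < Δ(W). -/

import Mathlib

noncomputable section

namespace HypSpace

/-- Inverse hyperbolic cosine. -/
def arcosh (x : ℝ) : ℝ := Real.log (x + Real.sqrt (x ^ 2 - 1))

/-- The Minkowski bilinear form on `ℝ^{d+1}` (signature `(d,1)`, the last
coordinate being timelike). -/
def mink (d : ℕ) (x y : EuclideanSpace ℝ (Fin (d + 1))) : ℝ :=
  (∑ i : Fin d, x i.castSucc * y i.castSucc) - x (Fin.last d) * y (Fin.last d)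

/-- The hyperboloid model of `d`-dimensional hyperbolic space: the upper sheet
of the two-sheeted hyperboloid `mink x x = -1`. -/
def Pt (d : ℕ) : Type := {x : EuclideanSpace ℝ (Fin (d + 1)) // mink d x x = -1 ∧ 0 < x (Fin.last d)}

variable {d : ℕ}

/-- Hyperbolic distance between two points of `ℍ^d`. -/
def hdist (p q : Pt d) : ℝ := arcosh (-(mink d p.1 q.1))

/-- The geodesic segment between `a` and `b`, described metrically via betweenness
(hyperbolic space is uniquely geodesic). -/
def seg (a b : Pt d) : Set (Pt d) := {p | hdist a p + hdist p b = hdist a b}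

/-- A set is (geodesically) convex if it contains the segment between any two of its points. -/
def IsConvexSet (C : Set (Pt d)) : Prop := ∀ a ∈ C, ∀ b ∈ C, seg a b ⊆ C

/-- The convex hull: the smallest convex set containing `A`. -/
def chull (A : Set (Pt d)) : Set (Pt d) := ⋂₀ {C | IsConvexSet C ∧ A ⊆ C}

/-- The totally geodesic hyperplane with (spacelike) normal vector `v`. -/
def plane (v : EuclideanSpace ℝ (Fin (d + 1))) : Set (Pt d) := {p | mink d v p.1 = 0}

/-- A hyperplane of `ℍ^d`: the trace on the hyperboloid of a linear hyperplane
with spacelike unit normal. -/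
def IsHyperplane (H : Set (Pt d)) : Prop := ∃ v, mink d v v = 1 ∧ H = plane v

/-- Distance from a point to a set. -/
def distPS (p : Pt d) (S : Set (Pt d)) : ℝ := sInf (hdist p '' S)

/-- Distance between two sets. -/
def distSS (A B : Set (Pt d)) : ℝ := sInf {r | ∃ a ∈ A, ∃ b ∈ B, hdist a b = r}

/-- `h` is the orthogonal projection of `g` onto `H`: the point of `H`
realizing the distance from `g` to `H`.  For a hyperplane `H` with `a ∈ H`,
`IsProj b H a` also expresses that `H` is orthogonal to the segment `ab` at `a`. -/
def IsProj (g : Pt d) (H : Set (Pt d)) (h : Pt d) : Prop :=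
  h ∈ H ∧ ∀ k ∈ H, hdist g h ≤ hdist g k

/-- Two hyperplanes are ultraparallel if they are disjoint and not asymptotically
parallel (their distance is positive, i.e. they admit a common perpendicular). -/
def Ultraparallel (H J : Set (Pt d)) : Prop :=
  IsHyperplane H ∧ IsHyperplane J ∧ H ∩ J = ∅ ∧ 0 < distSS H J

/-- `p` is an interior point of `C`. -/
def IsIntr (C : Set (Pt d)) (p : Pt d) : Prop := ∃ ε > 0, ∀ q, hdist p q < ε → q ∈ C

/-- `p` is a boundary point of the (closed) set `C`. -/
def IsBdry (C : Set (Pt d)) (p : Pt d) : Prop := p ∈ C ∧ ¬ IsIntr C p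

/-- `C` is bounded. -/
def IsBddSet (C : Set (Pt d)) : Prop := ∃ R, ∀ a ∈ C, ∀ b ∈ C, hdist a b ≤ R

/-- `C` is closed. -/
def IsClosedSet (C : Set (Pt d)) : Prop :=
  ∀ p : Pt d, (∀ ε > 0, ∃ q ∈ C, hdist p q < ε) → p ∈ C

/-- A convex body: a compact (closed and bounded) convex set with nonempty interior. -/
def IsBody (C : Set (Pt d)) : Prop :=
  IsConvexSet C ∧ IsBddSet C ∧ IsClosedSet C ∧ ∃ p, IsIntr C p

/-- The hyperplane `H` supports `C`: it meets `C` but misses its interior. -/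
def Supports (H C : Set (Pt d)) : Prop :=
  IsHyperplane H ∧ (H ∩ C).Nonempty ∧ ∀ p, IsIntr C p → p ∉ H

/-- The width of `C` determined by `H`, as the maximum distance from `H`
to a point of `C`. -/
def width (H C : Set (Pt d)) : ℝ := sSup ((fun c => distPS c H) '' C)

/-- The width of `C` determined by `H`, as the distance from `H` to a farthest
supporting hyperplane of `C` ultraparallel to `H`. -/
def widthUP (H C : Set (Pt d)) : ℝ :=
  sSup {r | ∃ J, Supports J C ∧ Ultraparallel H J ∧ distSS H J = r}

/-- The thickness of `C`: the minimum width over supporting hyperplanes. -/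
def thickness (C : Set (Pt d)) : ℝ := sInf {r | ∃ H, Supports H C ∧ width H C = r}

/-- The diameter of `C`. -/
def diam (C : Set (Pt d)) : ℝ := sSup {r | ∃ a ∈ C, ∃ b ∈ C, hdist a b = r}

/-- A body of constant width `δ`. -/
def ConstWidth (W : Set (Pt d)) (δ : ℝ) : Prop :=
  IsBody W ∧ ∀ H, Supports H W → width H W = δ

/-- A complete set of diameter `δ`. -/
def CompleteSet (C : Set (Pt d)) (δ : ℝ) : Prop :=
  diam C = δ ∧ ∀ x, x ∉ C → diam (C ∪ {x}) > δ

/-- A body of constant diameter `δ`. -/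
def ConstDiam (C : Set (Pt d)) (δ : ℝ) : Prop :=
  diam C = δ ∧ ∀ p, IsBdry C p → ∃ p' ∈ C, hdist p p' = δ

/-!
Take `w ∈ W \ Z` and a hyperplane through `w` missing `Z`; its normal `v` at `w` spans,
together with `w`, a geodesic, and we slide the hyperplanes orthogonal to this geodesic. The
last one meeting `Z`, at parameter `t_Z < 0`, supports `Z`; the last one meeting `W`, at
parameter `t_W ≥ 0`, supports `W`. Distances to such hyperplanes grow at least linearly in the
parameter (`arsinh (m sinh a) + h ≤ arsinh (m sinh (a + h))` for `m ≥ 1`), so every point of `Z`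
is within `δ - (t_W - t_Z)` of the first hyperplane, while every width of `W` is `δ`.

The separating hyperplane comes from Hahn–Banach in the Beltrami–Klein model centred at `w`,
where geodesically convex sets become convex.
-/

open Real Topology

local notation "V" => EuclideanSpace ℝ (Fin (d + 1))

/-! ### Real functions -/

theorem continuousAt_arcosh_one : ContinuousAt Real.arcosh 1 := by
  unfold Real.arcosh
  exact ContinuousAt.log (by fun_prop) (by norm_num)

theorem arcosh_add_arcosh {A B : ℝ} (hA : 1 ≤ A) (hB : 1 ≤ B) :
    Real.arcosh A + Real.arcosh B = Real.arcosh (A * B + √((A ^ 2 - 1) * (B ^ 2 - 1))) := by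
  rw [← Real.arcosh_cosh (add_nonneg (Real.arcosh_nonneg hA) (Real.arcosh_nonneg hB)), cosh_add,
    Real.cosh_arcosh hA, Real.cosh_arcosh hB, Real.sinh_arcosh hA, Real.sinh_arcosh hB,
    ← Real.sqrt_mul (by nlinarith)]

theorem arsinh_mul_sinh_add_le {m : ℝ} (hm : 1 ≤ m) (a : ℝ) {h : ℝ} (hh : 0 ≤ h) :
    arsinh (m * sinh a) + h ≤ arsinh (m * sinh (a + h)) := by
  have hsqrt : √(1 + (m * sinh a) ^ 2) ≤ m * cosh a := by
    rw [Real.sqrt_le_left (by nlinarith [cosh_pos a]), mul_pow, mul_pow, cosh_sq]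
    nlinarith [sq_nonneg (sinh a)]
  calc arsinh (m * sinh a) + h = arsinh (sinh (arsinh (m * sinh a) + h)) := (arsinh_sinh _).symm
    _ ≤ arsinh (m * sinh (a + h)) := by
      rw [arsinh_le_arsinh, sinh_add, sinh_arsinh, cosh_arsinh, sinh_add]
      nlinarith [mul_le_mul_of_nonneg_right hsqrt (sinh_nonneg_iff.2 hh)]

/-! ### Minkowski space -/

theorem mink_comm (x y : V) : mink d x y = mink d y x := by
  simp only [mink, mul_comm]

@[simp]
theorem mink_add_left (x y z : V) : mink d (x + y) z = mink d x z + mink d y z := by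
  simp only [mink, PiLp.add_apply, add_mul, Finset.sum_add_distrib]; ring

@[simp]
theorem mink_smul_left (a : ℝ) (x y : V) : mink d (a • x) y = a * mink d x y := by
  simp only [mink, PiLp.smul_apply, smul_eq_mul, mul_assoc, ← Finset.mul_sum, mul_sub]

@[simp]
theorem mink_sub_left (x y z : V) : mink d (x - y) z = mink d x z - mink d y z := by
  simp only [mink, PiLp.sub_apply, sub_mul, Finset.sum_sub_distrib]; ring

@[simp]
theorem mink_neg_left (x y : V) : mink d (-x) y = -mink d x y := by
  rw [← neg_one_smul ℝ x, mink_smul_left, neg_one_mul]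

@[simp]
theorem mink_add_right (x y z : V) : mink d x (y + z) = mink d x y + mink d x z := by
  simp only [mink_comm x, mink_add_left]

@[simp]
theorem mink_smul_right (a : ℝ) (x y : V) : mink d x (a • y) = a * mink d x y := by
  simp only [mink_comm x, mink_smul_left]

@[simp]
theorem mink_sub_right (x y z : V) : mink d x (y - z) = mink d x y - mink d x z := by
  simp only [mink_comm x, mink_sub_left]

@[fun_prop]
theorem Continuous.mink {α : Type*} [TopologicalSpace α] {f g : α → V} (hf : Continuous f)
    (hg : Continuous g) : Continuous fun a => mink d (f a) (g a) := by
  unfold HypSpace.mink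
  fun_prop

def spatialDot (x y : V) : ℝ := ∑ i : Fin d, x i.castSucc * y i.castSucc

theorem mink_eq_spatialDot (x y : V) :
    mink d x y = spatialDot x y - x (Fin.last d) * y (Fin.last d) := rfl

theorem spatialDot_self_nonneg (x : V) : 0 ≤ spatialDot x x :=
  Finset.sum_nonneg fun _ _ => mul_self_nonneg _

theorem spatialDot_sq_le (x y : V) : spatialDot x y ^ 2 ≤ spatialDot x x * spatialDot y y := by
  simpa only [spatialDot, pow_two] using
    Finset.sum_mul_sq_le_sq_mul_sq Finset.univ (fun i : Fin d => x i.castSucc)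
      (fun i => y i.castSucc)

theorem norm_sq_eq_spatialDot_add (x : V) : ‖x‖ ^ 2 = spatialDot x x + x (Fin.last d) ^ 2 := by
  rw [EuclideanSpace.real_norm_sq_eq, Fin.sum_univ_castSucc]
  simp only [spatialDot, pow_two]

/-! ### The hyperboloid -/

theorem Pt.spatialDot_self (p : Pt d) : spatialDot p.1 p.1 = p.1 (Fin.last d) ^ 2 - 1 := by
  linarith [p.2.1, mink_eq_spatialDot p.1 p.1]

theorem Pt.one_le_last (p : Pt d) : 1 ≤ p.1 (Fin.last d) := by
  nlinarith [p.spatialDot_self, spatialDot_self_nonneg p.1, p.2.2]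

theorem Pt.norm_le (q : Pt d) : ‖q.1‖ ≤ 2 * q.1 (Fin.last d) := by
  have hq := q.one_le_last
  refine le_of_sq_le_sq ?_ (by linarith)
  rw [norm_sq_eq_spatialDot_add, q.spatialDot_self]
  nlinarith

theorem one_le_neg_mink (p q : Pt d) : 1 ≤ -mink d p.1 q.1 := by
  have hcs := spatialDot_sq_le p.1 q.1
  rw [p.spatialDot_self, q.spatialDot_self] at hcs
  have hp := p.one_le_last
  have hq := q.one_le_last
  have hle : spatialDot p.1 q.1 ≤ p.1 (Fin.last d) * q.1 (Fin.last d) - 1 :=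
    le_of_sq_le_sq (by nlinarith [sq_nonneg (p.1 (Fin.last d) - q.1 (Fin.last d))])
      (by nlinarith)
  linarith [mink_eq_spatialDot p.1 q.1]

theorem last_le_neg_mink (p q : Pt d) :
    q.1 (Fin.last d) ≤ 2 * p.1 (Fin.last d) * -mink d p.1 q.1 := by
  have hcs := spatialDot_sq_le p.1 q.1
  rw [p.spatialDot_self, q.spatialDot_self] at hcs
  have hp := p.one_le_last
  have hq := q.one_le_last
  have h4 : (0 : ℝ) ≤ 4 * p.1 (Fin.last d) ^ 2 := by positivity
  have h5 : (0 : ℝ) ≤ p.1 (Fin.last d) ^ 2 * (p.1 (Fin.last d) ^ 2 - 1) :=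
    mul_nonneg (sq_nonneg _) (by nlinarith)
  have hle : 2 * p.1 (Fin.last d) * spatialDot p.1 q.1
      ≤ (2 * p.1 (Fin.last d) ^ 2 - 1) * q.1 (Fin.last d) :=
    le_of_sq_le_sq (by nlinarith [mul_le_mul_of_nonneg_left hcs h4]) (by nlinarith)
  rw [mink_eq_spatialDot]
  nlinarith

theorem last_pos_of_mink_neg (p : Pt d) {x : V} (hx : mink d x x < 0)
    (hpx : mink d p.1 x < 0) : 0 < x (Fin.last d) := by
  by_contra! hxL
  have hcs := spatialDot_sq_le p.1 x
  rw [p.spatialDot_self] at hcs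
  have hp := p.one_le_last
  have hxx := mink_eq_spatialDot x x
  have hpx' := mink_eq_spatialDot p.1 x
  have hsx := spatialDot_self_nonneg x
  have hlt : (p.1 (Fin.last d) * x (Fin.last d)) ^ 2 < spatialDot p.1 x ^ 2 := by
    have h1 : spatialDot p.1 x - p.1 (Fin.last d) * x (Fin.last d) < 0 := by nlinarith
    have h2 : spatialDot p.1 x + p.1 (Fin.last d) * x (Fin.last d) < 0 := by nlinarith
    nlinarith [mul_pos_of_neg_of_neg h1 h2]
  nlinarith [mul_nonneg (by nlinarith : (0:ℝ) ≤ p.1 (Fin.last d) ^ 2 - 1)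
    (by nlinarith : 0 ≤ x (Fin.last d) ^ 2 - spatialDot x x)]

theorem exists_eq_smul_pt {x : V} {μ : ℝ} (hμ : 0 < μ) (hx : mink d x x = -μ ^ 2) (p : Pt d)
    (hpx : mink d p.1 x < 0) : ∃ q : Pt d, x = μ • q.1 := by
  refine ⟨⟨μ⁻¹ • x, ?_, ?_⟩, by rw [smul_smul, mul_inv_cancel₀ hμ.ne', one_smul]⟩
  · rw [mink_smul_left, mink_smul_right, hx]
    field_simp
  · rw [PiLp.smul_apply, smul_eq_mul]
    exact mul_pos (inv_pos.2 hμ) (last_pos_of_mink_neg p (by nlinarith) hpx)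

theorem mink_self_pos_of_orthogonal (p : Pt d) {z : V} (hpz : mink d p.1 z = 0) (hz : z ≠ 0) :
    0 < mink d z z := by
  have hcs := spatialDot_sq_le p.1 z
  rw [p.spatialDot_self, show spatialDot p.1 z = p.1 (Fin.last d) * z (Fin.last d) by
    linarith [mink_eq_spatialDot p.1 z]] at hcs
  have hp := p.one_le_last
  have hnorm : 0 < ‖z‖ ^ 2 := by positivity
  rw [norm_sq_eq_spatialDot_add] at hnorm
  have hT := spatialDot_self_nonneg z
  have key : spatialDot z z ≤ p.1 (Fin.last d) ^ 2 * (spatialDot z z - z (Fin.last d) ^ 2) := by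
    nlinarith
  rw [mink_eq_spatialDot, ← pow_two]
  by_contra! hle
  have ha : 0 < p.1 (Fin.last d) ^ 2 := by positivity
  have hprod := mul_nonpos_of_nonneg_of_nonpos ha.le (sub_nonpos.2 hle)
  have hT0 : spatialDot z z = 0 := le_antisymm (by linarith) hT
  nlinarith [mul_pos ha (by nlinarith : 0 < z (Fin.last d) ^ 2)]

theorem mink_self_nonneg_of_orthogonal (p : Pt d) {z : V} (hpz : mink d p.1 z = 0) :
    0 ≤ mink d z z := by
  rcases eq_or_ne z 0 with rfl | hz
  · simp [mink]
  · exact (mink_self_pos_of_orthogonal p hpz hz).le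

theorem arcosh_eq_real_arcosh : HypSpace.arcosh = Real.arcosh := rfl

theorem cosh_hdist (p q : Pt d) : cosh (hdist p q) = -mink d p.1 q.1 :=
  cosh_arcosh (one_le_neg_mink p q)

theorem hdist_nonneg (p q : Pt d) : 0 ≤ hdist p q := arcosh_nonneg (one_le_neg_mink p q)

theorem hdist_self (p : Pt d) : hdist p p = 0 := by
  rw [hdist, p.2.1, neg_neg, arcosh_eq_real_arcosh, Real.arcosh_zero]

theorem neg_mink_le_cosh {p q : Pt d} {R : ℝ} (h : hdist p q ≤ R) :
    -mink d p.1 q.1 ≤ cosh R := by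
  rw [← cosh_hdist, cosh_le_cosh, abs_of_nonneg (hdist_nonneg p q)]
  exact h.trans (le_abs_self R)

theorem mem_seg_of_smul_eq {a b q : Pt d} {α β μ : ℝ} (hα : 0 ≤ α) (hβ : 0 ≤ β)
    (hμ : 0 < μ) (h : α • a.1 + β • b.1 = μ • q.1) : q ∈ seg a b := by
  obtain ⟨γ, hab⟩ : ∃ γ, mink d a.1 b.1 = -γ := ⟨_, (neg_neg _).symm⟩
  have hγ1 : 1 ≤ γ := by simpa [hab] using one_le_neg_mink a b
  have hba : mink d b.1 a.1 = -γ := by rw [mink_comm, hab]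
  have hμ2 : μ ^ 2 = α ^ 2 + β ^ 2 + 2 * α * β * γ := by
    have := congrArg (fun x => mink d x x) h
    simp only [mink_add_left, mink_add_right, mink_smul_left, mink_smul_right, a.2.1, b.2.1,
      q.2.1, hab, hba] at this
    linarith
  have hA : -mink d a.1 q.1 = (α + β * γ) / μ := by
    have := congrArg (mink d a.1) h
    simp only [mink_add_right, mink_smul_right, a.2.1, hab] at this
    field_simp
    linarith
  have hB : -mink d q.1 b.1 = (α * γ + β) / μ := by
    have := congrArg (fun x => mink d x b.1) h
    simp only [mink_add_left, mink_smul_left, b.2.1, hab] at this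
    field_simp
    linarith
  have hsqrt : √(((-mink d a.1 q.1) ^ 2 - 1) * ((-mink d q.1 b.1) ^ 2 - 1))
      = α * β * (γ ^ 2 - 1) / μ ^ 2 := by
    have hnonneg : 0 ≤ α * β * (γ ^ 2 - 1) / μ ^ 2 :=
      div_nonneg (mul_nonneg (mul_nonneg hα hβ) (by nlinarith)) (sq_nonneg μ)
    rw [← Real.sqrt_sq hnonneg, hA, hB]
    congr 1
    field_simp
    rw [hμ2]
    ring
  show hdist a q + hdist q b = hdist a b
  rw [hdist, hdist, hdist, arcosh_eq_real_arcosh,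
    arcosh_add_arcosh (one_le_neg_mink a q) (one_le_neg_mink q b), hsqrt, hA, hB, hab, neg_neg]
  congr 1
  field_simp
  linear_combination (-γ) * hμ2

theorem exists_smul_mem_seg (a b : Pt d) {α β : ℝ} (hα : 0 ≤ α) (hβ : 0 ≤ β)
    (hαβ : 0 < α + β) :
    ∃ μ : ℝ, 0 < μ ∧ ∃ q ∈ seg a b, α • a.1 + β • b.1 = μ • q.1 := by
  have hγ := one_le_neg_mink a b
  have hba : mink d b.1 a.1 = mink d a.1 b.1 := mink_comm _ _
  have hsq : (α + β) ^ 2 ≤ α ^ 2 + β ^ 2 + 2 * α * β * -mink d a.1 b.1 := by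
    nlinarith [mul_nonneg hα hβ]
  set μ := √(α ^ 2 + β ^ 2 + 2 * α * β * -mink d a.1 b.1)
  have hμ : 0 < μ := Real.sqrt_pos.2 (by nlinarith)
  have hμ2 : μ ^ 2 = α ^ 2 + β ^ 2 + 2 * α * β * -mink d a.1 b.1 :=
    Real.sq_sqrt (by nlinarith)
  obtain ⟨q, hq⟩ := exists_eq_smul_pt hμ (x := α • a.1 + β • b.1) (by
    simp only [mink_add_left, mink_add_right, mink_smul_left, mink_smul_right, a.2.1, b.2.1, hba]
    linarith) a (by
    simp only [mink_add_right, mink_smul_right, a.2.1]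
    nlinarith)
  exact ⟨μ, hμ, q, mem_seg_of_smul_eq hα hβ hμ hq, hq⟩

/-! ### Compactness -/

abbrev lift (C : Set (Pt d)) : Set V := (fun p : Pt d => p.1) '' C

theorem isClosed_lift {C : Set (Pt d)} (hC : IsClosedSet C) : IsClosed (lift C) := by
  refine isClosed_of_closure_subset fun x hx => ?_
  have hS : IsClosed {y : V | mink d y y = -1 ∧ 1 ≤ y (Fin.last d)} :=
    (isClosed_eq (by fun_prop) continuous_const).inter
      (isClosed_le continuous_const (PiLp.continuous_apply 2 _ _))
  obtain ⟨hx1, hxL⟩ := closure_minimal (s := lift C)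
    (by rintro _ ⟨p, -, rfl⟩; exact ⟨p.2.1, Pt.one_le_last p⟩) hS hx
  let p : Pt d := ⟨x, hx1, by linarith⟩
  refine ⟨p, hC p fun ε hε => ?_, rfl⟩
  have hcont : ContinuousAt (fun y => Real.arcosh (-mink d x y)) x :=
    continuousAt_arcosh_one.comp_of_eq (by fun_prop) (by rw [hx1, neg_neg])
  have hnhds : {y | Real.arcosh (-mink d x y) < ε} ∈ 𝓝 x :=
    hcont.preimage_mem_nhds (Iio_mem_nhds (by simpa [hx1] using hε))
  obtain ⟨_, hy, q, hq, rfl⟩ := mem_closure_iff_nhds.1 hx _ hnhds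
  exact ⟨q, hq, hy⟩

theorem isBounded_lift {C : Set (Pt d)} (hC : IsBddSet C) :
    Bornology.IsBounded (lift C) := by
  obtain rfl | ⟨z, hz⟩ := C.eq_empty_or_nonempty
  · simp [lift]
  obtain ⟨R, hR⟩ := hC
  refine (Metric.isBounded_closedBall (x := 0) (r := 4 * z.1 (Fin.last d) * cosh R)).subset ?_
  rintro _ ⟨q, hq, rfl⟩
  rw [Metric.mem_closedBall, dist_zero_right]
  have h1 := last_le_neg_mink z q
  have h2 := neg_mink_le_cosh (hR z hz q hq)
  nlinarith [Pt.norm_le q, Pt.one_le_last z]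

theorem IsBody.nonempty {C : Set (Pt d)} (hC : IsBody C) : C.Nonempty := by
  obtain ⟨p, ε, hε, hp⟩ := hC.2.2.2
  exact ⟨p, hp p (by rwa [hdist_self])⟩

theorem isCompact_lift {C : Set (Pt d)} (hC : IsBody C) : IsCompact (lift C) :=
  Metric.isCompact_of_isClosed_isBounded (isClosed_lift hC.2.2.1) (isBounded_lift hC.2.1)

/-! ### Separation in the Klein model -/

theorem exists_mink_eq_clm (f : V →L[ℝ] ℝ) : ∃ v : V, ∀ x, mink d v x = f x := by
  set g := (InnerProductSpace.toDual ℝ V).symm f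
  refine ⟨WithLp.toLp 2 fun j => if j = Fin.last d then -g j else g j, fun x => ?_⟩
  have hg : f x = inner ℝ g x := by simp [g]
  rw [hg, PiLp.inner_apply, Fin.sum_univ_castSucc]
  simp [mink, Fin.castSucc_ne_last, mul_comm]

/-- Radial projection to the affine hyperplane tangent to the hyperboloid at `w`: this is the
Beltrami–Klein model centred at `w`, in which geodesic convexity becomes ordinary convexity. -/
def kleinProj (w : Pt d) (x : V) : V := (-mink d w.1 x)⁻¹ • x

theorem IsConvexSet.convex_kleinProj_image {Z : Set (Pt d)} (hZ : IsConvexSet Z) (w : Pt d) :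
    Convex ℝ (kleinProj w '' lift Z) := by
  rintro _ ⟨_, ⟨p, hp, rfl⟩, rfl⟩ _ ⟨_, ⟨q, hq, rfl⟩, rfl⟩ a b ha hb hab
  have hγp := one_le_neg_mink w p
  have hγq := one_le_neg_mink w q
  have hp1 : 0 < (-mink d w.1 p.1)⁻¹ := inv_pos.2 (by linarith)
  have hq1 : 0 < (-mink d w.1 q.1)⁻¹ := inv_pos.2 (by linarith)
  have hp2 : (-mink d w.1 p.1)⁻¹ ≤ 1 := inv_le_one_of_one_le₀ hγp
  have hq2 : (-mink d w.1 q.1)⁻¹ ≤ 1 := inv_le_one_of_one_le₀ hγq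
  have hpos : 0 < a * (-mink d w.1 p.1)⁻¹ + b * (-mink d w.1 q.1)⁻¹ := by
    nlinarith [mul_nonneg (mul_nonneg ha hp1.le) (sub_nonneg.2 hq2),
      mul_nonneg (mul_nonneg hb hq1.le) (sub_nonneg.2 hp2), mul_pos hp1 hq1]
  obtain ⟨μ, hμ, r, hr, hcomb⟩ := exists_smul_mem_seg p q
    (mul_nonneg ha (inv_nonneg.2 (by linarith))) (mul_nonneg hb (inv_nonneg.2 (by linarith))) hpos
  have hsum : a • kleinProj w p.1 + b • kleinProj w q.1 = μ • r.1 := by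
    rw [← hcomb, kleinProj, kleinProj, smul_smul, smul_smul]
  have hμr : μ * -mink d w.1 r.1 = 1 := by
    have := congrArg (mink d w.1) hcomb
    have hp3 : (-mink d w.1 p.1)⁻¹ * mink d w.1 p.1 = -1 := by
      rw [inv_neg, neg_mul, inv_mul_cancel₀ (by linarith : mink d w.1 p.1 < 0).ne]
    have hq3 : (-mink d w.1 q.1)⁻¹ * mink d w.1 q.1 = -1 := by
      rw [inv_neg, neg_mul, inv_mul_cancel₀ (by linarith : mink d w.1 q.1 < 0).ne]
    simp only [mink_add_right, mink_smul_right, mul_assoc, hp3, hq3] at this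
    linarith
  refine ⟨r.1, ⟨r, hZ p hp q hq hr, rfl⟩, ?_⟩
  rw [hsum, kleinProj, eq_inv_of_mul_eq_one_left hμr]

theorem notMem_kleinProj_image {Z : Set (Pt d)} {w : Pt d} (hw : w ∉ Z) :
    w.1 ∉ kleinProj w '' lift Z := by
  rintro ⟨_, ⟨p, hp, rfl⟩, h⟩
  have hγ := one_le_neg_mink w p
  have hpw : p.1 = (-mink d w.1 p.1) • w.1 := by
    have := congrArg ((-mink d w.1 p.1) • ·) h
    simp only [kleinProj, smul_smul, mul_inv_cancel₀ (by linarith : -mink d w.1 p.1 ≠ 0),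
      one_smul] at this
    exact this
  have hγ1 : -mink d w.1 p.1 = 1 := by
    have := congrArg (fun x => mink d x x) hpw
    simp only [mink_smul_left, mink_smul_right, p.2.1, w.2.1] at this
    nlinarith
  rw [hγ1, one_smul] at hpw
  exact hw (Subtype.ext hpw ▸ hp)

theorem isCompact_kleinProj_image {Z : Set (Pt d)} (hZ : IsCompact (lift Z)) (w : Pt d) :
    IsCompact (kleinProj w '' lift Z) := by
  refine hZ.image_of_continuousOn (ContinuousOn.fun_smul ?_ continuousOn_id)
  refine (Continuous.continuousOn (by fun_prop)).inv₀ ?_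
  rintro _ ⟨p, -, rfl⟩
  linarith [one_le_neg_mink w p]

theorem exists_mink_neg_of_notMem {Z : Set (Pt d)} (hconv : IsConvexSet Z)
    (hcpt : IsCompact (lift Z)) {w : Pt d} (hw : w ∉ Z) :
    ∃ n : V, mink d n w.1 = 0 ∧ ∀ c ∈ Z, mink d n c.1 < 0 := by
  obtain ⟨f, u, hfw, hfK⟩ := geometric_hahn_banach_point_closed
    (hconv.convex_kleinProj_image w) (isCompact_kleinProj_image hcpt w).isClosed
    (notMem_kleinProj_image hw)
  obtain ⟨v, hv⟩ := exists_mink_eq_clm f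
  -- correcting by a multiple of `mink d w.1` makes the functional vanish at `w`
  refine ⟨-(v + f w.1 • w.1), by simp [hv, w.2.1], fun c hc => ?_⟩
  have hγ := one_le_neg_mink w c
  have hfc : f c.1 = -mink d w.1 c.1 * f (kleinProj w c.1) := by
    rw [kleinProj, map_smul, smul_eq_mul, ← mul_assoc, mul_inv_cancel₀ (by linarith), one_mul]
  have := hfK _ ⟨c.1, ⟨c, hc, rfl⟩, rfl⟩
  simp only [mink_neg_left, mink_add_left, mink_smul_left, hv, hfc]
  nlinarith

theorem exists_separating_plane {Z : Set (Pt d)} (hZ : IsBody Z) {w : Pt d} (hw : w ∉ Z) :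
    ∃ v : V, mink d v v = 1 ∧ mink d v w.1 = 0 ∧ ∀ c ∈ Z, mink d v c.1 < 0 := by
  obtain ⟨n, hnw, hnZ⟩ := exists_mink_neg_of_notMem hZ.1 (isCompact_lift hZ) hw
  obtain ⟨c, hc⟩ := hZ.nonempty
  have hn0 : n ≠ 0 := by
    rintro rfl
    simpa [mink] using hnZ c hc
  have hnn : 0 < mink d n n := mink_self_pos_of_orthogonal w (by rwa [mink_comm]) hn0
  have hr : 0 < √(mink d n n) := Real.sqrt_pos.2 hnn
  refine ⟨(√(mink d n n))⁻¹ • n, ?_, by simp [hnw], fun c hc => ?_⟩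
  · rw [mink_smul_left, mink_smul_right, ← mul_assoc, ← pow_two, inv_pow, Real.sq_sqrt hnn.le,
      inv_mul_cancel₀ hnn.ne']
  · rw [mink_smul_left]
    exact mul_neg_of_pos_of_neg (inv_pos.2 hr) (hnZ c hc)

/-! ### Hyperplanes, distances and widths -/

theorem exists_hdist_lt_mink_pos (p : Pt d) {n : V} (hn : mink d n n = 1)
    (hnp : mink d n p.1 = 0) {ε : ℝ} (hε : 0 < ε) :
    ∃ q : Pt d, hdist p q < ε ∧ 0 < mink d n q.1 := by
  have hpn : mink d p.1 n = 0 := by rwa [mink_comm]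
  obtain ⟨q, hq⟩ := exists_eq_smul_pt one_pos (x := cosh (ε / 2) • p.1 + sinh (ε / 2) • n)
    (by simp only [mink_add_left, mink_add_right, mink_smul_left, mink_smul_right, p.2.1, hn,
          hnp, hpn]; nlinarith [cosh_sq (ε / 2)]) p
    (by simp only [mink_add_right, mink_smul_right, p.2.1, hpn]; nlinarith [cosh_pos (ε / 2)])
  rw [one_smul] at hq
  refine ⟨q, ?_, ?_⟩
  · rw [hdist, ← hq]
    simp only [mink_add_right, mink_smul_right, p.2.1, hpn, mul_zero, add_zero, mul_neg_one,
      neg_neg, arcosh_eq_real_arcosh, Real.arcosh_cosh (by linarith : 0 ≤ ε / 2)]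
    linarith
  · rw [← hq]
    simp only [mink_add_right, mink_smul_right, hn, hnp, mul_zero, zero_add, mul_one]
    exact sinh_pos_iff.2 (by linarith)

theorem supports_plane {C : Set (Pt d)} {n : V} (hn : mink d n n = 1) {c : Pt d} (hc : c ∈ C)
    (hnc : mink d n c.1 = 0) (hC : ∀ q ∈ C, mink d n q.1 ≤ 0) : Supports (plane n) C := by
  refine ⟨⟨n, hn, rfl⟩, ⟨c, hnc, hc⟩, fun p ⟨ε, hε, hp⟩ hnp => ?_⟩
  obtain ⟨q, hpq, hq⟩ := exists_hdist_lt_mink_pos p hn hnp hε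
  exact (hC q (hp q hpq)).not_gt hq

theorem distPS_plane {n : V} (hn : mink d n n = 1) (p : Pt d) :
    distPS p (plane n) = arsinh |mink d n p.1| := by
  set σ := mink d n p.1 with hσ
  set s := arsinh |σ|
  have hs : 0 ≤ s := arsinh_nonneg_iff.2 (abs_nonneg σ)
  have hcosh : cosh s ^ 2 = 1 + σ ^ 2 := by rw [cosh_sq, sinh_arsinh, sq_abs]; ring
  have hpn : mink d p.1 n = σ := mink_comm _ _
  obtain ⟨h, hh⟩ := exists_eq_smul_pt (cosh_pos s) (x := p.1 - σ • n)
    (by simp only [mink_sub_left, mink_sub_right, mink_smul_left, mink_smul_right, p.2.1, hn,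
      hpn, ← hσ]; linarith) p
    (by simp only [mink_sub_right, mink_smul_right, p.2.1, hpn]; nlinarith)
  have hph : ∀ k : Pt d, k ∈ plane n → mink d p.1 k.1 = cosh s * mink d h.1 k.1 := by
    intro k hk
    rw [show p.1 = cosh s • h.1 + σ • n by rw [← hh]; abel, mink_add_left, mink_smul_left,
      mink_smul_left, show mink d n k.1 = 0 from hk, mul_zero, add_zero]
  have hh_mem : h ∈ plane n := by
    have := congrArg (mink d n) hh
    simp only [mink_sub_right, mink_smul_right, hn, ← hσ, mul_one, sub_self] at this
    exact (mul_eq_zero.1 this.symm).resolve_left (cosh_pos s).ne'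
  refine (IsLeast.csInf_eq ⟨⟨h, hh_mem, ?_⟩, ?_⟩)
  · rw [hdist, hph h hh_mem, h.2.1, mul_neg_one, neg_neg, arcosh_eq_real_arcosh,
      Real.arcosh_cosh hs]
  · rintro _ ⟨k, hk, rfl⟩
    rw [← Real.arcosh_cosh hs, hdist, arcosh_eq_real_arcosh]
    refine (Real.arcosh_le_arcosh (cosh_pos s) (by linarith [one_le_neg_mink p k])).2 ?_
    rw [hph k hk]
    nlinarith [one_le_neg_mink h k, cosh_pos s]

theorem distPS_nonneg (p : Pt d) (S : Set (Pt d)) : 0 ≤ distPS p S :=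
  Real.sInf_nonneg (by rintro _ ⟨k, -, rfl⟩; exact hdist_nonneg p k)

theorem distPS_le_hdist {p k : Pt d} {S : Set (Pt d)} (hk : k ∈ S) : distPS p S ≤ hdist p k :=
  csInf_le ⟨0, by rintro _ ⟨k, -, rfl⟩; exact hdist_nonneg p k⟩ ⟨k, hk, rfl⟩

theorem width_nonneg (H C : Set (Pt d)) : 0 ≤ width H C :=
  Real.sSup_nonneg (by rintro _ ⟨c, -, rfl⟩; exact distPS_nonneg c H)

theorem distPS_le_width {H C : Set (Pt d)} (hH : (H ∩ C).Nonempty) (hC : IsBddSet C) {c : Pt d}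
    (hc : c ∈ C) : distPS c H ≤ width H C := by
  obtain ⟨g, hgH, hgC⟩ := hH
  obtain ⟨R, hR⟩ := hC
  refine le_csSup ⟨R, ?_⟩ ⟨c, hc, rfl⟩
  rintro _ ⟨c', hc', rfl⟩
  exact (distPS_le_hdist hgH).trans (hR c' hc' g hgC)

theorem thickness_le_width {H C : Set (Pt d)} (hH : Supports H C) : thickness C ≤ width H C :=
  csInf_le ⟨0, by rintro _ ⟨H', -, rfl⟩; exact width_nonneg H' C⟩ ⟨H, hH, rfl⟩

theorem ConstWidth.thickness_eq {W H : Set (Pt d)} {δ : ℝ} (hW : ConstWidth W δ)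
    (hH : Supports H W) : thickness W = δ := by
  have : {r | ∃ H, Supports H W ∧ width H W = r} = {δ} :=
    Set.eq_singleton_iff_unique_mem.2
      ⟨⟨H, hH, hW.2 H hH⟩, by rintro _ ⟨H', hH', rfl⟩; exact hW.2 H' hH'⟩
  rw [thickness, this, csInf_singleton]

/-! ### A pencil of hyperplanes orthogonal to a geodesic -/

section Pencil

variable (w : Pt d) (v : EuclideanSpace ℝ (Fin (d + 1)))

/-- `plane (pencilNormal w v t)` is the hyperplane orthogonal, at parameter `t`, to the
geodesic `s ↦ cosh s • w.1 + sinh s • v`. -/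
def pencilNormal (t : ℝ) : V := sinh t • w.1 + cosh t • v

/-- The hyperbolic cosine of the distance from `x` to that geodesic. -/
def pencilScale (x : V) : ℝ := √(mink d w.1 x ^ 2 - mink d v x ^ 2)

/-- The `t` for which `x` lies on `plane (pencilNormal w v t)`. -/
def pencilParam (x : V) : ℝ := arsinh (mink d v x / pencilScale w v x)

variable {w v}

theorem one_le_pencilScale (hv : mink d v v = 1) (hvw : mink d v w.1 = 0) (p : Pt d) :
    1 ≤ pencilScale w v p.1 := by
  have hwv : mink d w.1 v = 0 := by rwa [mink_comm]
  have hz := mink_self_nonneg_of_orthogonal w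
    (z := p.1 + mink d w.1 p.1 • w.1 - mink d v p.1 • v)
    (by simp only [mink_add_right, mink_sub_right, mink_smul_right, w.2.1, hwv]; ring)
  simp only [mink_add_left, mink_sub_left, mink_smul_left, mink_add_right, mink_sub_right,
    mink_smul_right, p.2.1, w.2.1, hv, hvw, hwv, mink_comm p.1] at hz
  rw [pencilScale, Real.one_le_sqrt]
  nlinarith

theorem mink_pencilNormal_self (hv : mink d v v = 1) (hvw : mink d v w.1 = 0) (t : ℝ) :
    mink d (pencilNormal w v t) (pencilNormal w v t) = 1 := by
  have hwv : mink d w.1 v = 0 := by rwa [mink_comm]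
  simp only [pencilNormal, mink_add_left, mink_add_right, mink_smul_left, mink_smul_right, w.2.1,
    hv, hvw, hwv]
  nlinarith [cosh_sq t]

theorem mink_pencilNormal (hv : mink d v v = 1) (hvw : mink d v w.1 = 0) (p : Pt d) (t : ℝ) :
    mink d (pencilNormal w v t) p.1 = pencilScale w v p.1 * sinh (pencilParam w v p.1 - t) := by
  have hρ := one_le_pencilScale hv hvw p
  have hρ2 : pencilScale w v p.1 ^ 2 = mink d w.1 p.1 ^ 2 - mink d v p.1 ^ 2 :=
    Real.sq_sqrt (by linarith [Real.one_le_sqrt.1 hρ])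
  have hcosh : cosh (pencilParam w v p.1) = -mink d w.1 p.1 / pencilScale w v p.1 := by
    rw [pencilParam, cosh_arsinh, ← Real.sqrt_sq (by
      have := one_le_neg_mink w p; positivity : 0 ≤ -mink d w.1 p.1 / pencilScale w v p.1)]
    congr 1
    field_simp
    linarith
  rw [sinh_sub, hcosh, pencilParam, sinh_arsinh, pencilNormal, mink_add_left, mink_smul_left,
    mink_smul_left]
  field_simp
  ring

theorem pencilParam_self (hvw : mink d v w.1 = 0) : pencilParam w v w.1 = 0 := by
  rw [pencilParam, hvw, zero_div, arsinh_zero]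

theorem pencilParam_neg (hv : mink d v v = 1) (hvw : mink d v w.1 = 0) {p : Pt d}
    (hp : mink d v p.1 < 0) : pencilParam w v p.1 < 0 :=
  arsinh_neg_iff.2 (div_neg_of_neg_of_pos hp (by linarith [one_le_pencilScale hv hvw p]))

theorem continuousOn_pencilParam (hv : mink d v v = 1) (hvw : mink d v w.1 = 0) (C : Set (Pt d)) :
    ContinuousOn (pencilParam w v) (lift C) := by
  refine ContinuousOn.arsinh (ContinuousOn.div (by fun_prop) (by unfold pencilScale; fun_prop) ?_)
  rintro _ ⟨p, -, rfl⟩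
  linarith [one_le_pencilScale hv hvw p]

end Pencil

theorem exists_supports_pencil {w : Pt d} {v : V} (hv : mink d v v = 1) (hvw : mink d v w.1 = 0)
    {C : Set (Pt d)} (hC : IsBody C) :
    ∃ c ∈ C, (∀ q ∈ C, pencilParam w v q.1 ≤ pencilParam w v c.1) ∧
      Supports (plane (pencilNormal w v (pencilParam w v c.1))) C := by
  obtain ⟨_, ⟨c, hc, rfl⟩, hmax⟩ := (isCompact_lift hC).exists_isMaxOn (hC.nonempty.image _)
    (continuousOn_pencilParam hv hvw C)
  have hle : ∀ q ∈ C, pencilParam w v q.1 ≤ pencilParam w v c.1 :=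
    fun q hq => hmax ⟨q, hq, rfl⟩
  refine ⟨c, hc, hle, supports_plane (mink_pencilNormal_self hv hvw _) hc ?_ fun q hq => ?_⟩
  · rw [mink_pencilNormal hv hvw, sub_self, sinh_zero, mul_zero]
  · rw [mink_pencilNormal hv hvw]
    exact mul_nonpos_of_nonneg_of_nonpos (by linarith [one_le_pencilScale hv hvw q])
      (sinh_nonpos_iff.2 (sub_nonpos.2 (hle q hq)))

theorem distPS_pencil {w : Pt d} {v : V} (hv : mink d v v = 1) (hvw : mink d v w.1 = 0)
    {p : Pt d} {t : ℝ} (hpt : pencilParam w v p.1 ≤ t) :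
    distPS p (plane (pencilNormal w v t)) =
      arsinh (pencilScale w v p.1 * sinh (t - pencilParam w v p.1)) := by
  rw [distPS_plane (mink_pencilNormal_self hv hvw t), mink_pencilNormal hv hvw, abs_mul,
    abs_of_nonneg (by linarith [one_le_pencilScale hv hvw p]), abs_of_nonpos
    (sinh_nonpos_iff.2 (sub_nonpos.2 hpt)), ← sinh_neg, neg_sub]

theorem distPS_pencil_add_le {w : Pt d} {v : V} (hv : mink d v v = 1) (hvw : mink d v w.1 = 0)
    {p : Pt d} {t₁ t₂ : ℝ} (h₁ : pencilParam w v p.1 ≤ t₁) (h₁₂ : t₁ ≤ t₂) :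
    distPS p (plane (pencilNormal w v t₁)) + (t₂ - t₁) ≤
      distPS p (plane (pencilNormal w v t₂)) := by
  rw [distPS_pencil hv hvw h₁, distPS_pencil hv hvw (h₁.trans h₁₂)]
  have := arsinh_mul_sinh_add_le (one_le_pencilScale hv hvw p) (t₁ - pencilParam w v p.1)
    (sub_nonneg.2 h₁₂)
  rwa [sub_add_sub_cancel'] at this

/-- Proposition 4: every body of constant width is reduced. -/
theorem constWidth_reduced {d : ℕ} (W : Set (Pt d)) (δ : ℝ) (hW : ConstWidth W δ) :
    ∀ Z : Set (Pt d), IsBody Z → Z ⊆ W → Z ≠ W → thickness Z < thickness W := by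
  intro Z hZ hZW hZW'
  obtain ⟨w, hwW, hwZ⟩ := Set.exists_of_ssubset (hZW.ssubset_of_ne hZW')
  obtain ⟨v, hv, hvw, hvZ⟩ := exists_separating_plane hZ hwZ
  obtain ⟨z, hz, hzmax, hsuppZ⟩ := exists_supports_pencil hv hvw hZ
  obtain ⟨x, -, hxmax, hsuppW⟩ := exists_supports_pencil hv hvw hW.1
  set tZ := pencilParam w v z.1
  set tW := pencilParam w v x.1
  have hgap : tZ < tW := (pencilParam_neg hv hvw (hvZ z hz)).trans_le
    (pencilParam_self hvw ▸ hxmax w hwW)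
  have hwidth : width (plane (pencilNormal w v tZ)) Z ≤ δ - (tW - tZ) := by
    refine csSup_le (hZ.nonempty.image _) ?_
    rintro _ ⟨c, hc, rfl⟩
    have hshift := distPS_pencil_add_le hv hvw (hzmax c hc) hgap.le
    have hδ := hW.2 _ hsuppW ▸ distPS_le_width hsuppW.2.1 hW.1.2.1 (hZW hc)
    linarith
  rw [hW.thickness_eq hsuppW]
  linarith [thickness_le_width hsuppZ]

end HypSpace
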